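/- arXiv:2302.08982 — 3 statements merged into one kernel-verified Lean document; each statement's English description precedes it below -/
import Mathlib

section
/- Assume uniform initialisation α = a·𝟏 with a > 0, and fix k ≥ 0 such that ‖γ_ℓ ∇L_{B_ℓ}(β_ℓ)‖_∞ ≤ 1/2 for all ℓ < k (so that α_k ≤ a·𝟏 coordinatewise). Then for every B > 0 the potential h_k is strongly convex with respect to the Euclidean norm, with strong convexity parameter 1/(4 max(B, a²)), on the ball {β ∈ ℝ^d : ‖β‖_∞ ≤ B}; consequently, since L is λ_max(H)-smooth, the function β ↦ 4 λ_max(H) max(B, a²) · h_k(β) − L(β) is convex on this ball, i.e. L is 4 λ_max(H) max(B, a²)-relatively smooth with respect to h_k there. -/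
open Finset Filter Real

noncomputable section

/-- Dot product on `Fin d → ℝ`. -/
def dotp {d : ℕ} (u v : Fin d → ℝ) : ℝ := ∑ j, u j * v j

/-- Batch loss `L_B(β) = (1/(2|B|)) ∑_{i∈B} (⟨x_i,β⟩ − y_i)²`. -/
def batchLoss {d n : ℕ} (x : Fin n → Fin d → ℝ) (y : Fin n → ℝ)
    (B : Finset (Fin n)) (β : Fin d → ℝ) : ℝ :=
  (1 / (2 * (B.card : ℝ))) * ∑ i ∈ B, (dotp (x i) β - y i) ^ 2

/-- Gradient of the batch loss. -/
def gradBatch {d n : ℕ} (x : Fin n → Fin d → ℝ) (y : Fin n → ℝ)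
    (B : Finset (Fin n)) (β : Fin d → ℝ) : Fin d → ℝ :=
  fun j => (1 / (B.card : ℝ)) * ∑ i ∈ B, (dotp (x i) β - y i) * x i j

/-- SGD on the `(w₊, w₋)` parametrisation of the diagonal linear network. -/
def Witer {d n : ℕ} (x : Fin n → Fin d → ℝ) (y : Fin n → ℝ) (α : Fin d → ℝ)
    (γ : ℕ → ℝ) (Bk : ℕ → Finset (Fin n)) : ℕ → (Fin d → ℝ) × (Fin d → ℝ)
  | 0 => (α, α)
  | k + 1 =>
      let w := Witer x y α γ Bk k
      let β : Fin d → ℝ := fun j => ((w.1 j) ^ 2 - (w.2 j) ^ 2) / 2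
      let g := gradBatch x y (Bk k) β
      (fun j => (1 - γ k * g j) * w.1 j, fun j => (1 + γ k * g j) * w.2 j)

/-- The prediction iterates `β_k = ½(w_{+,k}² − w_{−,k}²)`. -/
def betaIter {d n : ℕ} (x : Fin n → Fin d → ℝ) (y : Fin n → ℝ) (α : Fin d → ℝ)
    (γ : ℕ → ℝ) (Bk : ℕ → Finset (Fin n)) (k : ℕ) : Fin d → ℝ :=
  fun j => ((Witer x y α γ Bk k).1 j ^ 2 - (Witer x y α γ Bk k).2 j ^ 2) / 2

/-- The stochastic gradient `∇L_{B_k}(β_k)` used at step `k`. -/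
def gIter {d n : ℕ} (x : Fin n → Fin d → ℝ) (y : Fin n → ℝ) (α : Fin d → ℝ)
    (γ : ℕ → ℝ) (Bk : ℕ → Finset (Fin n)) (k : ℕ) : Fin d → ℝ :=
  gradBatch x y (Bk k) (betaIter x y α γ Bk k)

def qplus (t : ℝ) : ℝ := -2 * t - Real.log ((1 - t) ^ 2)

def qminus (t : ℝ) : ℝ := 2 * t - Real.log ((1 + t) ^ 2)

def qfun (t : ℝ) : ℝ := -(1 / 2) * Real.log ((1 - t ^ 2) ^ 2)

/-- `α_{+,k}²` coordinatewise. -/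
def alphaPlusSq {d n : ℕ} (x : Fin n → Fin d → ℝ) (y : Fin n → ℝ) (α : Fin d → ℝ)
    (γ : ℕ → ℝ) (Bk : ℕ → Finset (Fin n)) (k : ℕ) : Fin d → ℝ :=
  fun j => (α j) ^ 2 * Real.exp (-(∑ ℓ ∈ Finset.range k, qplus (γ ℓ * gIter x y α γ Bk ℓ j)))

/-- `α_{−,k}²` coordinatewise. -/
def alphaMinusSq {d n : ℕ} (x : Fin n → Fin d → ℝ) (y : Fin n → ℝ) (α : Fin d → ℝ)
    (γ : ℕ → ℝ) (Bk : ℕ → Finset (Fin n)) (k : ℕ) : Fin d → ℝ :=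
  fun j => (α j) ^ 2 * Real.exp (-(∑ ℓ ∈ Finset.range k, qminus (γ ℓ * gIter x y α γ Bk ℓ j)))

/-- `α_k² = α_{+,k} ⊙ α_{−,k}` coordinatewise. -/
def alphaSq {d n : ℕ} (x : Fin n → Fin d → ℝ) (y : Fin n → ℝ) (α : Fin d → ℝ)
    (γ : ℕ → ℝ) (Bk : ℕ → Finset (Fin n)) (k : ℕ) : Fin d → ℝ :=
  fun j => Real.sqrt (alphaPlusSq x y α γ Bk k j * alphaMinusSq x y α γ Bk k j)

/-- `φ_k = ½ arcsinh((α_{+,k}² − α_{−,k}²)/(2α_k²))`. -/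
def phiK {d n : ℕ} (x : Fin n → Fin d → ℝ) (y : Fin n → ℝ) (α : Fin d → ℝ)
    (γ : ℕ → ℝ) (Bk : ℕ → Finset (Fin n)) (k : ℕ) : Fin d → ℝ :=
  fun j => (1 / 2) * Real.arsinh ((alphaPlusSq x y α γ Bk k j - alphaMinusSq x y α γ Bk k j) /
    (2 * alphaSq x y α γ Bk k j))

/-- Hyperbolic entropy `ψ_a`, expressed in terms of the squared scale `aSq = a²`. -/
def psiSq {d : ℕ} (aSq : Fin d → ℝ) (β : Fin d → ℝ) : ℝ :=
  (1 / 2) * ∑ j, (β j * Real.arsinh (β j / aSq j) - Real.sqrt ((β j) ^ 2 + (aSq j) ^ 2) + aSq j)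

/-- The time-varying potential `h_k(β) = ψ_{α_k}(β) − ⟨φ_k, β⟩`. -/
def hK {d n : ℕ} (x : Fin n → Fin d → ℝ) (y : Fin n → ℝ) (α : Fin d → ℝ)
    (γ : ℕ → ℝ) (Bk : ℕ → Finset (Fin n)) (k : ℕ) (β : Fin d → ℝ) : ℝ :=
  psiSq (alphaSq x y α γ Bk k) β - dotp (phiK x y α γ Bk k) β

/-- The gradient of `h_k`: `∇h_k(β) = ½ arcsinh(β/α_k²) − φ_k` coordinatewise. -/
def gradHK {d n : ℕ} (x : Fin n → Fin d → ℝ) (y : Fin n → ℝ) (α : Fin d → ℝ)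
    (γ : ℕ → ℝ) (Bk : ℕ → Finset (Fin n)) (k : ℕ) (β : Fin d → ℝ) : Fin d → ℝ :=
  fun j => (1 / 2) * Real.arsinh (β j / alphaSq x y α γ Bk k j) - phiK x y α γ Bk k j

/-- Bregman divergence of `h_k`. -/
def DhK {d n : ℕ} (x : Fin n → Fin d → ℝ) (y : Fin n → ℝ) (α : Fin d → ℝ)
    (γ : ℕ → ℝ) (Bk : ℕ → Finset (Fin n)) (k : ℕ) (β β' : Fin d → ℝ) : ℝ :=
  hK x y α γ Bk k β - hK x y α γ Bk k β' -
    dotp (gradHK x y α γ Bk k β') (fun j => β j - β' j)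

/-- Euclidean norm on `Fin d → ℝ`. -/
def norm2 {d : ℕ} (v : Fin d → ℝ) : ℝ := Real.sqrt (∑ j, v j ^ 2)

/-- ℓ¹ norm on `Fin d → ℝ`. -/
def l1norm {d : ℕ} (v : Fin d → ℝ) : ℝ := ∑ j, |v j|

/-- `H_B β = (1/|B|) ∑_{i∈B} ⟨x_i, β⟩ x_i`. -/
def HBop {d n : ℕ} (x : Fin n → Fin d → ℝ) (B : Finset (Fin n)) (β : Fin d → ℝ) : Fin d → ℝ :=
  fun j => (1 / (B.card : ℝ)) * ∑ i ∈ B, dotp (x i) β * x i j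


/-! Auxiliary lemmas for stmt13 -/

def gfun (c u : ℝ) : ℝ := u * Real.arsinh (u / c) - Real.sqrt (u ^ 2 + c ^ 2)

lemma sqrt_ratio_aux (c u : ℝ) (hc : 0 < c) :
    Real.sqrt (1 + (u / c) ^ 2) = Real.sqrt (u ^ 2 + c ^ 2) / c := by
  rw [show (1 : ℝ) + (u / c) ^ 2 = (u ^ 2 + c ^ 2) / c ^ 2 by field_simp; ring]
  rw [Real.sqrt_div (by positivity), Real.sqrt_sq hc.le]

lemma hasDerivAt_gfun (c μ u : ℝ) (hc : 0 < c) :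
    HasDerivAt (fun z => gfun c z - μ * z ^ 2) (Real.arsinh (u / c) - 2 * μ * u) u := by
  have hpos : (0:ℝ) < u ^ 2 + c ^ 2 := by positivity
  have hsne : Real.sqrt (u ^ 2 + c ^ 2) ≠ 0 := by positivity
  have h1 : HasDerivAt (fun z : ℝ => z / c) (1 / c) u := by
    simpa using (hasDerivAt_id u).div_const c
  have h2 : HasDerivAt (fun z : ℝ => Real.arsinh (z / c))
      ((Real.sqrt (1 + (u / c) ^ 2))⁻¹ * (1 / c)) u :=
    (Real.hasDerivAt_arsinh _).comp u h1
  have h3 : HasDerivAt (fun z : ℝ => z * Real.arsinh (z / c))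
      (1 * Real.arsinh (u / c) + u * ((Real.sqrt (1 + (u / c) ^ 2))⁻¹ * (1 / c))) u :=
    (hasDerivAt_id u).mul h2
  have h4 : HasDerivAt (fun z : ℝ => z ^ 2 + c ^ 2) (2 * u) u := by
    simpa using (hasDerivAt_pow 2 u).add_const (c ^ 2)
  have h5 : HasDerivAt (fun z : ℝ => Real.sqrt (z ^ 2 + c ^ 2))
      (1 / (2 * Real.sqrt (u ^ 2 + c ^ 2)) * (2 * u)) u :=
    (Real.hasDerivAt_sqrt hpos.ne').comp u h4
  have h6 : HasDerivAt (fun z : ℝ => μ * z ^ 2) (μ * (2 * u)) u := by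
    simpa using (hasDerivAt_pow 2 u).const_mul μ
  have := (h3.sub h5).sub h6
  refine this.congr_deriv ?_
  rw [sqrt_ratio_aux c u hc]
  field_simp
  ring

lemma hasDerivAt_gfun' (c μ u : ℝ) (hc : 0 < c) :
    HasDerivAt (fun z => Real.arsinh (z / c) - 2 * μ * z)
      (1 / Real.sqrt (u ^ 2 + c ^ 2) - 2 * μ) u := by
  have hsne : Real.sqrt (u ^ 2 + c ^ 2) ≠ 0 := by positivity
  have h1 : HasDerivAt (fun z : ℝ => z / c) (1 / c) u := by
    simpa using (hasDerivAt_id u).div_const c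
  have h2 : HasDerivAt (fun z : ℝ => Real.arsinh (z / c))
      ((Real.sqrt (1 + (u / c) ^ 2))⁻¹ * (1 / c)) u :=
    (Real.hasDerivAt_arsinh _).comp u h1
  have h3 : HasDerivAt (fun z : ℝ => 2 * μ * z) (2 * μ) u := by
    simpa using (hasDerivAt_id u).const_mul (2 * μ)
  have := h2.sub h3
  refine this.congr_deriv ?_
  rw [sqrt_ratio_aux c u hc]
  field_simp

lemma convex_shift_aux (c Bb μ : ℝ) (hc : 0 < c)
    (h2 : ∀ z ∈ Set.Icc (-Bb) Bb, 2 * μ ≤ 1 / Real.sqrt (z ^ 2 + c ^ 2)) :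
    ConvexOn ℝ (Set.Icc (-Bb) Bb) (fun z => gfun c z - μ * z ^ 2) := by
  apply convexOn_of_hasDerivWithinAt2_nonneg (f' := fun z => Real.arsinh (z / c) - 2 * μ * z)
    (f'' := fun z => 1 / Real.sqrt (z ^ 2 + c ^ 2) - 2 * μ) (convex_Icc _ _)
  · exact fun z _ => ((hasDerivAt_gfun c μ z hc).continuousAt).continuousWithinAt
  · exact fun z _ => (hasDerivAt_gfun c μ z hc).hasDerivWithinAt
  · exact fun z _ => (hasDerivAt_gfun' c μ z hc).hasDerivWithinAt
  · intro z hz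
    have := h2 z (interior_subset hz)
    linarith

lemma strong_coord (c Bb μ : ℝ) (hc : 0 < c)
    (h2 : ∀ z ∈ Set.Icc (-Bb) Bb, 2 * μ ≤ 1 / Real.sqrt (z ^ 2 + c ^ 2))
    (u v : ℝ) (hu : |u| ≤ Bb) (hv : |v| ≤ Bb)
    (t : ℝ) (ht0 : 0 ≤ t) (ht1 : t ≤ 1) :
    gfun c (t * u + (1 - t) * v) ≤
      t * gfun c u + (1 - t) * gfun c v - μ * t * (1 - t) * (u - v) ^ 2 := by
  have hu' : u ∈ Set.Icc (-Bb) Bb := abs_le.mp hu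
  have hv' : v ∈ Set.Icc (-Bb) Bb := abs_le.mp hv
  have := (convex_shift_aux c Bb μ hc h2).2 hu' hv' ht0
    (show (0:ℝ) ≤ 1 - t by linarith) (by ring)
  simp only [smul_eq_mul] at this
  nlinarith [this]

lemma q_sum_nonneg (t : ℝ) (ht : |t| ≤ 1 / 2) : 0 ≤ qplus t + qminus t := by
  obtain ⟨h1, h2⟩ := abs_le.mp ht
  have p1 : (0:ℝ) < (1 - t) ^ 2 := by nlinarith
  have p2 : (0:ℝ) < (1 + t) ^ 2 := by nlinarith
  have heq : qplus t + qminus t = -Real.log ((1 - t) ^ 2 * (1 + t) ^ 2) := by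
    rw [Real.log_mul p1.ne' p2.ne']; unfold qplus qminus; ring
  rw [heq]
  have ht2 : t ^ 2 ≤ 1 / 4 := by nlinarith
  have hle : (1 - t) ^ 2 * (1 + t) ^ 2 ≤ 1 := by nlinarith [sq_nonneg t]
  have := Real.log_nonpos (by positivity) hle
  linarith

lemma quad_id (d n : ℕ) (x : Fin n → Fin d → ℝ) (v : Fin d → ℝ) :
    (∑ p, ∑ q, v p * ((1 / (n : ℝ)) * ∑ i, x i p * x i q) * v q)
      = (1 / (n : ℝ)) * ∑ i, (dotp (x i) v) ^ 2 := by
  have L : (∑ p, ∑ q, v p * ((1 / (n : ℝ)) * ∑ i, x i p * x i q) * v q)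
      = ∑ p, ∑ q, ∑ i, (1 / (n:ℝ)) * (v p * x i p * (x i q * v q)) := by
    apply Finset.sum_congr rfl; intro p _
    apply Finset.sum_congr rfl; intro q _
    simp only [Finset.mul_sum, Finset.sum_mul]
    apply Finset.sum_congr rfl; intro i _; ring
  have R : (1 / (n : ℝ)) * ∑ i, (dotp (x i) v) ^ 2
      = ∑ i, ∑ p, ∑ q, (1 / (n:ℝ)) * (v p * x i p * (x i q * v q)) := by
    rw [Finset.mul_sum]
    apply Finset.sum_congr rfl; intro i _
    rw [sq, dotp, Finset.sum_mul_sum, Finset.mul_sum]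
    apply Finset.sum_congr rfl; intro p _
    rw [Finset.mul_sum]
    apply Finset.sum_congr rfl; intro q _; ring
  rw [L, R]
  conv_rhs => rw [Finset.sum_comm]
  apply Finset.sum_congr rfl; intro p _
  rw [Finset.sum_comm]


/-- on the ℓ∞ ball of radius `B`, the potential `h_k` is
`1/(4 max(B, a²))`-strongly convex w.r.t. the Euclidean norm; consequently the quadratic loss
`L` (which is `λ_max(H)`-smooth) is `4 λ_max(H) max(B, a²)`-relatively smooth w.r.t. `h_k`
there, i.e. `4 λ_max(H) max(B, a²) · h_k − L` is convex on this ball. -/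
theorem stmt13 (d n : ℕ) (x : Fin n → Fin d → ℝ) (y : Fin n → ℝ)
    (a : ℝ) (ha : 0 < a)
    (γ : ℕ → ℝ) (hγ : ∀ k, 0 ≤ γ k)
    (Bk : ℕ → Finset (Fin n)) (hBk : ∀ k, (Bk k).Nonempty)
    (k : ℕ)
    (hstep : ∀ ℓ, ℓ < k → ∀ j, |γ ℓ * gIter x y (fun _ => a) γ Bk ℓ j| ≤ 1 / 2)
    (B : ℝ) (hB : 0 < B)
    (lamH : ℝ)
    (hlam : IsLeast {r : ℝ | ∀ β : Fin d → ℝ,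
      (∑ p, ∑ q, β p * ((1 / (n : ℝ)) * ∑ i, x i p * x i q) * β q) ≤ r * ∑ p, (β p) ^ 2} lamH) :
    (∀ β β' : Fin d → ℝ, ‖β‖ ≤ B → ‖β'‖ ≤ B → ∀ t : ℝ, 0 ≤ t → t ≤ 1 →
      hK x y (fun _ => a) γ Bk k (fun j => t * β j + (1 - t) * β' j) ≤
        t * hK x y (fun _ => a) γ Bk k β + (1 - t) * hK x y (fun _ => a) γ Bk k β' -
          (1 / (4 * max B (a ^ 2))) / 2 * t * (1 - t) * ∑ j, (β j - β' j) ^ 2) ∧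
    ConvexOn ℝ {β : Fin d → ℝ | ‖β‖ ≤ B}
      (fun β => 4 * lamH * max B (a ^ 2) * hK x y (fun _ => a) γ Bk k β -
        batchLoss x y Finset.univ β) := by
  have hM : (0:ℝ) < max B (a ^ 2) := lt_max_of_lt_left hB
  set c : Fin d → ℝ := alphaSq x y (fun _ => a) γ Bk k with hc_def
  set φ : Fin d → ℝ := phiK x y (fun _ => a) γ Bk k with hφ_def
  -- bounds on c
  have hcpos : ∀ j, 0 < c j := by
    intro j
    rw [hc_def]
    simp only [alphaSq, alphaPlusSq, alphaMinusSq]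
    have := ha
    positivity
  have hcle : ∀ j, c j ≤ a ^ 2 := by
    intro j
    rw [hc_def]
    simp only [alphaSq, alphaPlusSq, alphaMinusSq]
    have hprod : ((fun _ : Fin d => a) j) ^ 2 *
        Real.exp (-(∑ ℓ ∈ Finset.range k, qplus (γ ℓ * gIter x y (fun _ => a) γ Bk ℓ j))) *
        (((fun _ : Fin d => a) j) ^ 2 *
        Real.exp (-(∑ ℓ ∈ Finset.range k, qminus (γ ℓ * gIter x y (fun _ => a) γ Bk ℓ j))))
        ≤ (a ^ 2) ^ 2 := by
      simp only
      have he : Real.exp (-(∑ ℓ ∈ Finset.range k, qplus (γ ℓ * gIter x y (fun _ => a) γ Bk ℓ j))) *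
          Real.exp (-(∑ ℓ ∈ Finset.range k, qminus (γ ℓ * gIter x y (fun _ => a) γ Bk ℓ j)))
          = Real.exp (-(∑ ℓ ∈ Finset.range k,
              (qplus (γ ℓ * gIter x y (fun _ => a) γ Bk ℓ j) +
               qminus (γ ℓ * gIter x y (fun _ => a) γ Bk ℓ j)))) := by
        rw [← Real.exp_add, Finset.sum_add_distrib]; ring_nf
      have hS : 0 ≤ ∑ ℓ ∈ Finset.range k,
          (qplus (γ ℓ * gIter x y (fun _ => a) γ Bk ℓ j) +
           qminus (γ ℓ * gIter x y (fun _ => a) γ Bk ℓ j)) := by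
        apply Finset.sum_nonneg
        intro ℓ hℓ
        exact q_sum_nonneg _ (hstep ℓ (Finset.mem_range.mp hℓ) j)
      have hexp : Real.exp (-(∑ ℓ ∈ Finset.range k,
          (qplus (γ ℓ * gIter x y (fun _ => a) γ Bk ℓ j) +
           qminus (γ ℓ * gIter x y (fun _ => a) γ Bk ℓ j)))) ≤ 1 :=
        Real.exp_le_one_iff.mpr (by linarith)
      calc a ^ 2 * Real.exp (-(∑ ℓ ∈ Finset.range k, qplus (γ ℓ * gIter x y (fun _ => a) γ Bk ℓ j))) *
            (a ^ 2 * Real.exp (-(∑ ℓ ∈ Finset.range k, qminus (γ ℓ * gIter x y (fun _ => a) γ Bk ℓ j))))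
          = (a ^ 2) ^ 2 * (Real.exp (-(∑ ℓ ∈ Finset.range k, qplus (γ ℓ * gIter x y (fun _ => a) γ Bk ℓ j))) *
            Real.exp (-(∑ ℓ ∈ Finset.range k, qminus (γ ℓ * gIter x y (fun _ => a) γ Bk ℓ j)))) := by ring
        _ ≤ (a ^ 2) ^ 2 * 1 := by
            rw [he]
            apply mul_le_mul_of_nonneg_left hexp (by positivity)
        _ = (a ^ 2) ^ 2 := by ring
    calc Real.sqrt _ ≤ Real.sqrt ((a ^ 2) ^ 2) := Real.sqrt_le_sqrt hprod
      _ = a ^ 2 := Real.sqrt_sq (by positivity)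
  -- the second-derivative bound on the interval
  have h2nd : ∀ j, ∀ z ∈ Set.Icc (-B) B,
      2 * (1 / (4 * max B (a ^ 2))) ≤ 1 / Real.sqrt (z ^ 2 + (c j) ^ 2) := by
    intro j z hz
    obtain ⟨hz1, hz2⟩ := hz
    have hzB : z ^ 2 ≤ (max B (a ^ 2)) ^ 2 := by
      have h1 : |z| ≤ max B (a ^ 2) := (abs_le.mpr ⟨hz1, hz2⟩).trans (le_max_left _ _)
      nlinarith [abs_nonneg z, sq_abs z]
    have hcB : (c j) ^ 2 ≤ (max B (a ^ 2)) ^ 2 := by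
      have h1 := hcle j
      have h2 := (hcpos j).le
      nlinarith [le_max_right B (a ^ 2)]
    have hsle : Real.sqrt (z ^ 2 + (c j) ^ 2) ≤ 2 * max B (a ^ 2) := by
      calc Real.sqrt (z ^ 2 + (c j) ^ 2) ≤ Real.sqrt ((2 * max B (a ^ 2)) ^ 2) := by
            apply Real.sqrt_le_sqrt; nlinarith
        _ = 2 * max B (a ^ 2) := Real.sqrt_sq (by positivity)
    have hspos : 0 < Real.sqrt (z ^ 2 + (c j) ^ 2) :=
      Real.sqrt_pos.mpr (add_pos_of_nonneg_of_pos (sq_nonneg z) (pow_pos (hcpos j) 2))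
    rw [show 2 * (1 / (4 * max B (a ^ 2))) = 1 / (2 * max B (a ^ 2)) by field_simp; ring]
    exact one_div_le_one_div_of_le hspos hsle
  -- a clean formula for hK
  have hK_eq : ∀ v : Fin d → ℝ, hK x y (fun _ => a) γ Bk k v
      = (1 / 2) * ((∑ j, gfun (c j) (v j)) + ∑ j, c j) - ∑ j, φ j * v j := by
    intro v
    simp only [hK, psiSq, dotp, ← hc_def, ← hφ_def]
    congr 1
    congr 1
    rw [← Finset.sum_add_distrib]
    rfl
  -- PART 1
  have part1 : ∀ β β' : Fin d → ℝ, ‖β‖ ≤ B → ‖β'‖ ≤ B → ∀ t : ℝ, 0 ≤ t → t ≤ 1 →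
      hK x y (fun _ => a) γ Bk k (fun j => t * β j + (1 - t) * β' j) ≤
        t * hK x y (fun _ => a) γ Bk k β + (1 - t) * hK x y (fun _ => a) γ Bk k β' -
          (1 / (4 * max B (a ^ 2))) / 2 * t * (1 - t) * ∑ j, (β j - β' j) ^ 2 := by
    intro β β' hβ hβ' t ht0 ht1
    have habs : ∀ j, |β j| ≤ B := fun j => by
      have := norm_le_pi_norm β j; rw [Real.norm_eq_abs] at this; linarith
    have habs' : ∀ j, |β' j| ≤ B := fun j => by
      have := norm_le_pi_norm β' j; rw [Real.norm_eq_abs] at this; linarith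
    have key : ∀ j, gfun (c j) (t * β j + (1 - t) * β' j) ≤
        t * gfun (c j) (β j) + (1 - t) * gfun (c j) (β' j) -
          (1 / (4 * max B (a ^ 2))) * t * (1 - t) * (β j - β' j) ^ 2 := fun j =>
      strong_coord (c j) B _ (hcpos j) (h2nd j) (β j) (β' j) (habs j) (habs' j) t ht0 ht1
    have hsum : ∑ j, gfun (c j) (t * β j + (1 - t) * β' j) ≤
        t * (∑ j, gfun (c j) (β j)) + (1 - t) * (∑ j, gfun (c j) (β' j)) -
          (1 / (4 * max B (a ^ 2))) * t * (1 - t) * ∑ j, (β j - β' j) ^ 2 := by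
      calc ∑ j, gfun (c j) (t * β j + (1 - t) * β' j)
          ≤ ∑ j, (t * gfun (c j) (β j) + (1 - t) * gfun (c j) (β' j) -
              (1 / (4 * max B (a ^ 2))) * t * (1 - t) * (β j - β' j) ^ 2) :=
            Finset.sum_le_sum (fun j _ => key j)
        _ = t * (∑ j, gfun (c j) (β j)) + (1 - t) * (∑ j, gfun (c j) (β' j)) -
              (1 / (4 * max B (a ^ 2))) * t * (1 - t) * ∑ j, (β j - β' j) ^ 2 := by
            rw [Finset.sum_sub_distrib, Finset.sum_add_distrib, Finset.mul_sum,
              Finset.mul_sum, Finset.mul_sum]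
    have hmid : ∑ j, φ j * (t * β j + (1 - t) * β' j)
        = t * (∑ j, φ j * β j) + (1 - t) * (∑ j, φ j * β' j) := by
      rw [Finset.mul_sum, Finset.mul_sum, ← Finset.sum_add_distrib]
      exact Finset.sum_congr rfl fun j _ => by ring
    rw [hK_eq, hK_eq, hK_eq]
    linarith [hsum, hmid]
  refine ⟨part1, ?_⟩
  have hlam0 : 0 ≤ lamH := by
    rcases Nat.eq_zero_or_pos d with hd | hd
    · exfalso
      subst hd
      have hmem : (lamH - 1) ∈ {r : ℝ | ∀ β : Fin 0 → ℝ,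
          (∑ p, ∑ q, β p * ((1 / (n : ℝ)) * ∑ i, x i p * x i q) * β q) ≤ r * ∑ p, (β p) ^ 2} := by
        intro β; simp
      have := hlam.2 hmem
      linarith
    · have h1 := hlam.1 (fun _ => (1:ℝ))
      rw [quad_id] at h1
      have hL : 0 ≤ (1 / (n:ℝ)) * ∑ i, (dotp (x i) (fun _ => (1:ℝ))) ^ 2 := by positivity
      have hsq : ∑ p : Fin d, ((1:ℝ)) ^ 2 = (d : ℝ) := by simp
      rw [hsq] at h1
      have hdpos : (0:ℝ) < (d:ℝ) := by exact_mod_cast hd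
      nlinarith
  constructor
  · have hset : {β : Fin d → ℝ | ‖β‖ ≤ B} = Metric.closedBall 0 B := by
      ext β; simp [Metric.mem_closedBall, dist_zero_right]
    rw [hset]
    exact convex_closedBall 0 B
  · intro β hβ β' hβ' s t hs ht hst
    have ht' : t = 1 - s := by linarith
    subst ht'
    have hβB : ‖β‖ ≤ B := hβ
    have hβ'B : ‖β'‖ ≤ B := hβ'
    have hp1 := part1 β β' hβB hβ'B s hs (by linarith)
    have hmidf : (s • β + (1 - s) • β') = (fun j => s * β j + (1 - s) * β' j) := by
      funext j; simp
    rw [hmidf]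
    have hdot_mid : ∀ i, dotp (x i) (fun j => s * β j + (1 - s) * β' j)
        = s * dotp (x i) β + (1 - s) * dotp (x i) β' := by
      intro i
      simp only [dotp, Finset.mul_sum, ← Finset.sum_add_distrib]
      exact Finset.sum_congr rfl fun j _ => by ring
    have hdot_sub : ∀ i, dotp (x i) (fun j => β j - β' j)
        = dotp (x i) β - dotp (x i) β' := by
      intro i
      simp only [dotp, ← Finset.sum_sub_distrib]
      exact Finset.sum_congr rfl fun j _ => by ring
    have hcard : (((Finset.univ : Finset (Fin n))).card : ℝ) = (n : ℝ) := by simp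
    have hper : ∀ i : Fin n, s * (dotp (x i) β - y i) ^ 2 + (1 - s) * (dotp (x i) β' - y i) ^ 2
        - (dotp (x i) (fun j => s * β j + (1 - s) * β' j) - y i) ^ 2
        = (s * (1 - s)) * (dotp (x i) (fun j => β j - β' j)) ^ 2 := by
      intro i; rw [hdot_mid i, hdot_sub i]; ring
    have hsum2 : ∑ i, (s * (dotp (x i) β - y i) ^ 2 + (1 - s) * (dotp (x i) β' - y i) ^ 2
        - (dotp (x i) (fun j => s * β j + (1 - s) * β' j) - y i) ^ 2)
        = (s * (1 - s)) * ∑ i, (dotp (x i) (fun j => β j - β' j)) ^ 2 := by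
      rw [Finset.mul_sum]
      exact Finset.sum_congr rfl fun i _ => hper i
    rw [Finset.sum_sub_distrib, Finset.sum_add_distrib, ← Finset.mul_sum, ← Finset.mul_sum]
      at hsum2
    have Lid : s * batchLoss x y Finset.univ β + (1 - s) * batchLoss x y Finset.univ β'
        - batchLoss x y Finset.univ (fun j => s * β j + (1 - s) * β' j)
        = (1 / (2 * (n:ℝ))) * (s * (1 - s)) * ∑ i, (dotp (x i) (fun j => β j - β' j)) ^ 2 := by
      simp only [batchLoss, hcard]
      linear_combination (1 / (2 * (n:ℝ))) * hsum2
    have hquad : (1 / (n:ℝ)) * ∑ i, (dotp (x i) (fun j => β j - β' j)) ^ 2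
        ≤ lamH * ∑ j, (β j - β' j) ^ 2 := by
      have h := hlam.1 (fun j => β j - β' j)
      rw [quad_id] at h
      exact h
    have hb : (1 / (2 * (n:ℝ))) * (s * (1 - s)) * ∑ i, (dotp (x i) (fun j => β j - β' j)) ^ 2
        ≤ lamH / 2 * (s * (1 - s)) * ∑ j, (β j - β' j) ^ 2 := by
      have h3 := mul_le_mul_of_nonneg_left hquad
        (mul_nonneg hs (by linarith : (0:ℝ) ≤ 1 - s))
      have e : (1 / (2 * (n:ℝ))) * (s * (1 - s)) * ∑ i, (dotp (x i) (fun j => β j - β' j)) ^ 2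
          = (1 / 2) * (s * (1 - s) * ((1 / (n:ℝ)) * ∑ i, (dotp (x i) (fun j => β j - β' j)) ^ 2)) := by
        ring
      have e' : lamH / 2 * (s * (1 - s)) * ∑ j, (β j - β' j) ^ 2
          = (1 / 2) * (s * (1 - s) * (lamH * ∑ j, (β j - β' j) ^ 2)) := by ring
      rw [e, e']
      linarith [h3]
    have hK0 : (0:ℝ) ≤ 4 * lamH * max B (a ^ 2) := by positivity
    have h1 := mul_le_mul_of_nonneg_left hp1 hK0
    have e1 : 4 * lamH * max B (a ^ 2) *
        ((1 / (4 * max B (a ^ 2))) / 2 * s * (1 - s) * ∑ j, (β j - β' j) ^ 2)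
        = lamH / 2 * (s * (1 - s)) * ∑ j, (β j - β' j) ^ 2 := by
      field_simp
    simp only [smul_eq_mul]
    linarith [h1, e1, Lid, hb]



end
end

section
/- Fix k ≥ 0 and suppose ‖γ_ℓ ∇L_{B_ℓ}(β_ℓ)‖_∞ < 1 for all ℓ < k. Then coordinatewise: w_{+,k} ⊙ w_{−,k} = α_k² and w_{+,k}² + w_{−,k}² = 2√(α_k⁴ + β_k²). -/
open Finset Filter Real

noncomputable section

/-!
The two updates multiply `w₊` and `w₋` by `1 - t` and `1 + t` with `t = γ_k ∇L_{B_k}(β_k)`, so their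
product is multiplied by `1 - t²`. For `|t| < 1` the weights `exp (-q₊ t)`, `exp (-q₋ t)` of `α_{±,k}²`
multiply to `(1 - t²)²`, so `α_k²` is multiplied by `1 - t²` as well; both start at `α²`. The second
identity is then the algebraic identity `(a² + b²)² = 4 (ab)² + (a² - b²)²`.
-/

lemma exp_neg_qplus_add_qminus {t : ℝ} (ht : |t| < 1) :
    Real.exp (-(qplus t + qminus t)) = (1 - t ^ 2) ^ 2 := by
  obtain ⟨ht₁, ht₂⟩ := abs_lt.mp ht
  have hminus : (0 : ℝ) < (1 - t) ^ 2 := pow_pos (by linarith) 2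
  have hplus : (0 : ℝ) < (1 + t) ^ 2 := pow_pos (by linarith) 2
  have hsum : -(qplus t + qminus t) = Real.log ((1 - t) ^ 2) + Real.log ((1 + t) ^ 2) := by
    unfold qplus qminus; ring
  rw [hsum, Real.exp_add, Real.exp_log hminus, Real.exp_log hplus]
  ring

lemma sq_add_sq_eq_two_mul_sqrt (a b : ℝ) :
    a ^ 2 + b ^ 2 = 2 * Real.sqrt ((a * b) ^ 2 + ((a ^ 2 - b ^ 2) / 2) ^ 2) := by
  have hsquare : (a * b) ^ 2 + ((a ^ 2 - b ^ 2) / 2) ^ 2 = ((a ^ 2 + b ^ 2) / 2) ^ 2 := by ring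
  rw [hsquare, Real.sqrt_sq (by positivity)]
  ring

section Trajectory

variable {d n : ℕ} (x : Fin n → Fin d → ℝ) (y : Fin n → ℝ) (α : Fin d → ℝ)
  (γ : ℕ → ℝ) (Bk : ℕ → Finset (Fin n))

lemma Witer_succ_fst (k : ℕ) (j : Fin d) :
    (Witer x y α γ Bk (k + 1)).1 j = (1 - γ k * gIter x y α γ Bk k j) * (Witer x y α γ Bk k).1 j :=
  rfl

lemma Witer_succ_snd (k : ℕ) (j : Fin d) :
    (Witer x y α γ Bk (k + 1)).2 j = (1 + γ k * gIter x y α γ Bk k j) * (Witer x y α γ Bk k).2 j :=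
  rfl

lemma Witer_fst_mul_snd_succ (k : ℕ) (j : Fin d) :
    (Witer x y α γ Bk (k + 1)).1 j * (Witer x y α γ Bk (k + 1)).2 j =
      (1 - (γ k * gIter x y α γ Bk k j) ^ 2) *
        ((Witer x y α γ Bk k).1 j * (Witer x y α γ Bk k).2 j) := by
  rw [Witer_succ_fst, Witer_succ_snd]
  ring

lemma alphaSq_zero (j : Fin d) : alphaSq x y α γ Bk 0 j = α j ^ 2 := by
  simp only [alphaSq, alphaPlusSq, alphaMinusSq, Finset.range_zero, Finset.sum_empty, neg_zero,
    Real.exp_zero, mul_one]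
  exact Real.sqrt_mul_self (sq_nonneg _)

lemma alphaPlusSq_mul_alphaMinusSq_succ (k : ℕ) (j : Fin d) :
    alphaPlusSq x y α γ Bk (k + 1) j * alphaMinusSq x y α γ Bk (k + 1) j =
      alphaPlusSq x y α γ Bk k j * alphaMinusSq x y α γ Bk k j *
        Real.exp (-(qplus (γ k * gIter x y α γ Bk k j) + qminus (γ k * gIter x y α γ Bk k j))) := by
  simp only [alphaPlusSq, alphaMinusSq, Finset.sum_range_succ, neg_add, Real.exp_add]
  ring

lemma alphaSq_succ (k : ℕ) (j : Fin d) (hstep : |γ k * gIter x y α γ Bk k j| < 1) :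
    alphaSq x y α γ Bk (k + 1) j =
      (1 - (γ k * gIter x y α γ Bk k j) ^ 2) * alphaSq x y α γ Bk k j := by
  have hcontract : 0 ≤ 1 - (γ k * gIter x y α γ Bk k j) ^ 2 := by
    nlinarith [abs_lt.mp hstep]
  rw [alphaSq, alphaPlusSq_mul_alphaMinusSq_succ, exp_neg_qplus_add_qminus hstep,
    Real.sqrt_mul' _ (sq_nonneg _), Real.sqrt_sq hcontract, alphaSq, mul_comm]

lemma Witer_fst_mul_snd_eq_alphaSq (k : ℕ)
    (hstep : ∀ ℓ, ℓ < k → ∀ j, |γ ℓ * gIter x y α γ Bk ℓ j| < 1) (j : Fin d) :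
    (Witer x y α γ Bk k).1 j * (Witer x y α γ Bk k).2 j = alphaSq x y α γ Bk k j := by
  induction k with
  | zero => rw [alphaSq_zero, sq]; rfl
  | succ k ih =>
    rw [Witer_fst_mul_snd_succ, alphaSq_succ _ _ _ _ _ _ _ (hstep k k.lt_succ_self j),
      ih fun ℓ hℓ => hstep ℓ (hℓ.trans k.lt_succ_self)]

end Trajectory

theorem stmt14_general (d n : ℕ) (x : Fin n → Fin d → ℝ) (y : Fin n → ℝ)
    (α : Fin d → ℝ) (γ : ℕ → ℝ) (Bk : ℕ → Finset (Fin n))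
    (k : ℕ) (hstep : ∀ ℓ, ℓ < k → ∀ j, |γ ℓ * gIter x y α γ Bk ℓ j| < 1) :
    ∀ j, (Witer x y α γ Bk k).1 j * (Witer x y α γ Bk k).2 j = alphaSq x y α γ Bk k j ∧
      (Witer x y α γ Bk k).1 j ^ 2 + (Witer x y α γ Bk k).2 j ^ 2 =
        2 * Real.sqrt ((alphaSq x y α γ Bk k j) ^ 2 + (betaIter x y α γ Bk k j) ^ 2) := by
  intro j
  have hprod := Witer_fst_mul_snd_eq_alphaSq x y α γ Bk k hstep j
  refine ⟨hprod, ?_⟩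
  rw [← hprod, betaIter]
  exact sq_add_sq_eq_two_mul_sqrt _ _

/-- coordinatewise, `w_{+,k} ⊙ w_{−,k} = α_k²` and
`w_{+,k}² + w_{−,k}² = 2√(α_k⁴ + β_k²)`. -/
theorem stmt14 (d n : ℕ) (x : Fin n → Fin d → ℝ) (y : Fin n → ℝ)
    (α : Fin d → ℝ) (hα : ∀ j, 0 < α j)
    (γ : ℕ → ℝ) (hγ : ∀ k, 0 ≤ γ k)
    (Bk : ℕ → Finset (Fin n)) (hBk : ∀ k, (Bk k).Nonempty)
    (k : ℕ) (hstep : ∀ ℓ, ℓ < k → ∀ j, |γ ℓ * gIter x y α γ Bk ℓ j| < 1) :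
    ∀ j, (Witer x y α γ Bk k).1 j * (Witer x y α γ Bk k).2 j = alphaSq x y α γ Bk k j ∧
      (Witer x y α γ Bk k).1 j ^ 2 + (Witer x y α γ Bk k).2 j ^ 2 =
        2 * Real.sqrt ((alphaSq x y α γ Bk k j) ^ 2 + (betaIter x y α γ Bk k j) ^ 2) :=
  stmt14_general d n x y α γ Bk k hstep

end
end

section
/- There exist numerical constants C₂, C₃, d₀ > 0 with the following property. Let μ ∈ ℝ, σ > 0, d ≥ d₀, and let x_1,…,x_n be independent random vectors in ℝ^d whose d coordinates are independent Gaussian N(μ, σ²) random variables. Set H = (1/n) Σ_{i=1}^n x_i x_iᵀ and H̃ = (1/n) Σ_{i=1}^n ‖x_i‖₂² x_i x_iᵀ. Then with probability at least 1 − 2n(e^{−d/16} + e^{−√d}), one has C₂ (μ² + σ²) d · H ⪯ H̃ ⪯ C₃ (μ² + σ²) d · H, where A ⪯ B means B − A is positive semidefinite. -/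
open MeasureTheory ProbabilityTheory

noncomputable section

/-- The empirical second-moment matrix `H = (1/n) Σ_i x_i x_iᵀ`. -/
def empH {d n : ℕ} (ω : Fin n → Fin d → ℝ) : Matrix (Fin d) (Fin d) ℝ :=
  Matrix.of fun p q => (1 / (n : ℝ)) * ∑ i, ω i p * ω i q

/-- The weighted matrix `H̃ = (1/n) Σ_i ‖x_i‖₂² x_i x_iᵀ`. -/
def empHtilde {d n : ℕ} (ω : Fin n → Fin d → ℝ) : Matrix (Fin d) (Fin d) ℝ :=
  Matrix.of fun p q => (1 / (n : ℝ)) * ∑ i, (∑ l, (ω i l) ^ 2) * (ω i p * ω i q)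

section Aux

open Real NNReal Finset
open scoped ENNReal

lemma exponent_sq (t : ℝ) (μ : ℝ) (v : ℝ) (hv : 0 < v) (ht : 2 * v * t < 1)
    (x : ℝ) :
    -(x - μ) ^ 2 / (2 * v) + t * x ^ 2 =
      t * μ^2 / (1 - 2*v*t) + -((1 - 2*v*t)/(2*v)) * (x - μ/(1-2*v*t)) ^ 2 := by
  have h1 : (1 - 2*v*t) ≠ 0 := by nlinarith
  field_simp
  ring

lemma gauss_exp_sq (μ : ℝ) (v : ℝ≥0) (hv : 0 < (v:ℝ)) (t : ℝ) (ht : 2 * (v:ℝ) * t < 1) :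
    Integrable (fun x => Real.exp (t * x^2)) (gaussianReal μ v) ∧
    ∫ x, Real.exp (t * x^2) ∂(gaussianReal μ v)
      = Real.exp (t * μ^2 / (1 - 2*(v:ℝ)*t)) / Real.sqrt (1 - 2*(v:ℝ)*t) := by
  have hv0 : v ≠ 0 := by exact_mod_cast hv.ne'
  set b : ℝ := (1 - 2*(v:ℝ)*t)/(2*(v:ℝ)) with hb_def
  have h1 : (0:ℝ) < 1 - 2*(v:ℝ)*t := by linarith
  have hb : 0 < b := by positivity
  set c : ℝ := μ/(1-2*(v:ℝ)*t) with hc_def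
  set e : ℝ := t * μ^2 / (1 - 2*(v:ℝ)*t) with he_def
  have key : ∀ x : ℝ, gaussianPDFReal μ v x * Real.exp (t * x^2)
      = (Real.sqrt (2 * π * v))⁻¹ * Real.exp e * Real.exp (-b * (x - c)^2) := by
    intro x
    rw [gaussianPDFReal, mul_assoc, ← Real.exp_add, exponent_sq t μ (v:ℝ) hv ht x,
      Real.exp_add]
    ring
  have int_vol : Integrable (fun x => Real.exp (-b * (x - c)^2)) volume :=
    (integrable_exp_neg_mul_sq hb).comp_sub_right c
  have int_den : Integrable (fun x => gaussianPDFReal μ v x * Real.exp (t * x^2)) volume := by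
    simp_rw [key]
    exact int_vol.const_mul _
  have hmeas : gaussianReal μ v = volume.withDensity (fun x => ((gaussianPDFReal μ v x).toNNReal : ℝ≥0∞)) := by
    rw [gaussianReal_of_var_ne_zero _ hv0]
    congr 1
  have hfmeas : Measurable (fun x => (gaussianPDFReal μ v x).toNNReal) :=
    (measurable_gaussianPDFReal μ v).real_toNNReal
  have hsmul : ∀ x : ℝ, (gaussianPDFReal μ v x).toNNReal • Real.exp (t * x^2)
      = gaussianPDFReal μ v x * Real.exp (t * x^2) := by
    intro x
    rw [NNReal.smul_def, smul_eq_mul, Real.coe_toNNReal _ (gaussianPDFReal_nonneg μ v x)]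
  have hsqrt : (Real.sqrt (2 * π * v))⁻¹ * Real.sqrt (π / b) = (Real.sqrt (1 - 2*(v:ℝ)*t))⁻¹ := by
    rw [← Real.sqrt_inv, ← Real.sqrt_mul (by positivity), ← Real.sqrt_inv]
    congr 1
    rw [hb_def]
    field_simp
  constructor
  · rw [hmeas, integrable_withDensity_iff_integrable_smul hfmeas]
    simpa only [hsmul] using int_den
  · rw [hmeas, integral_withDensity_eq_integral_smul hfmeas]
    simp_rw [hsmul, key]
    rw [integral_const_mul, integral_sub_right_eq_self (fun x => Real.exp (-b * x^2)) c,
      integral_gaussian]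
    calc (Real.sqrt (2 * π * v))⁻¹ * Real.exp e * Real.sqrt (π / b)
        = ((Real.sqrt (2 * π * v))⁻¹ * Real.sqrt (π / b)) * Real.exp e := by ring
      _ = (Real.sqrt (1 - 2*(v:ℝ)*t))⁻¹ * Real.exp e := by rw [hsqrt]
      _ = Real.exp e / Real.sqrt (1 - 2*(v:ℝ)*t) := by rw [inv_mul_eq_div]

lemma pi_exp_sum (ν : Measure ℝ) [IsProbabilityMeasure ν] (d : ℕ) (t : ℝ)
    (hint : Integrable (fun x => Real.exp (t * x^2)) ν) :
    Integrable (fun x : Fin d → ℝ => Real.exp (t * ∑ l, (x l)^2)) (Measure.pi fun _ => ν) ∧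
    ∫ x : Fin d → ℝ, Real.exp (t * ∑ l, (x l)^2) ∂(Measure.pi fun _ => ν)
      = (∫ y, Real.exp (t * y^2) ∂ν)^d := by
  letI : MeasureSpace ℝ := ⟨ν⟩
  have hvol : (volume : Measure ℝ) = ν := rfl
  have hsf : SigmaFinite (volume : Measure ℝ) := by rw [hvol]; infer_instance
  have hint' : Integrable (fun x => Real.exp (t * x^2)) volume := hint
  have hexp : ∀ x : Fin d → ℝ, Real.exp (t * ∑ l, (x l)^2) = ∏ l, Real.exp (t * (x l)^2) := by
    intro x
    rw [Finset.mul_sum, Real.exp_sum]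
  have hpi : (Measure.pi fun _ : Fin d => ν) = (volume : Measure (Fin d → ℝ)) := rfl
  constructor
  · simp_rw [hexp, hpi]
    exact Integrable.fintype_prod (fun _ => hint')
  · simp_rw [hexp, hpi]
    rw [← hvol]
    have := MeasureTheory.integral_fintype_prod_eq_pow (ι := Fin d) (fun y => Real.exp (t * y^2)) (μ := (volume : Measure ℝ))
    rw [Fintype.card_fin] at this
    exact this

lemma entry_eq {d n : ℕ} (ω : Fin n → Fin d → ℝ) (c : ℝ) (p q : Fin d) :
    (empHtilde ω - c • empH ω) p q
      = ∑ i, (1/(n:ℝ)) * ((∑ l, (ω i l)^2) - c) * (ω i p * ω i q) := by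
  simp only [Matrix.sub_apply, Matrix.smul_apply, empH, empHtilde, Matrix.of_apply,
    smul_eq_mul, Finset.mul_sum]
  rw [← Finset.sum_sub_distrib]
  apply Finset.sum_congr rfl
  intro i _
  ring

lemma quad_form {d n : ℕ} (ω : Fin n → Fin d → ℝ) (c : ℝ) (x : Fin d → ℝ) :
    dotProduct x (Matrix.mulVec (empHtilde ω - c • empH ω) x)
      = ∑ i, (1/(n:ℝ)) * ((∑ l, (ω i l)^2) - c) * (∑ p, x p * ω i p)^2 := by
  have hmv : ∀ p, (Matrix.mulVec (empHtilde ω - c • empH ω) x) p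
      = ∑ i, (1/(n:ℝ)) * ((∑ l, (ω i l)^2) - c) * (ω i p * (∑ q, x q * ω i q)) := by
    intro p
    rw [Matrix.mulVec, dotProduct]
    simp_rw [entry_eq, Finset.sum_mul]
    rw [Finset.sum_comm]
    apply Finset.sum_congr rfl
    intro i _
    simp only [Finset.mul_sum]
    apply Finset.sum_congr rfl
    intro q _
    ring
  rw [dotProduct]
  simp_rw [hmv, Finset.mul_sum]
  rw [Finset.sum_comm]
  apply Finset.sum_congr rfl
  intro i _
  simp only [Finset.mul_sum, sq, Finset.sum_mul]
  rw [Finset.sum_comm]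
  apply Finset.sum_congr rfl
  intro p _
  apply Finset.sum_congr rfl
  intro q _
  ring

lemma herm {d n : ℕ} (ω : Fin n → Fin d → ℝ) (c : ℝ) :
    (empHtilde ω - c • empH ω).IsHermitian := by
  unfold Matrix.IsHermitian
  ext p q
  rw [Matrix.conjTranspose_apply, entry_eq, entry_eq, star_trivial]
  apply Finset.sum_congr rfl
  intro i _
  ring

lemma psd_lower {d n : ℕ} (ω : Fin n → Fin d → ℝ) (c : ℝ)
    (h : ∀ i, c ≤ ∑ l, (ω i l)^2) :
    (empHtilde ω - c • empH ω).PosSemidef := by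
  rw [Matrix.posSemidef_iff_dotProduct_mulVec]
  constructor
  · exact herm ω c
  · intro x
    rw [star_trivial, quad_form]
    apply Finset.sum_nonneg
    intro i _
    have h1 : (0:ℝ) ≤ 1/(n:ℝ) := by positivity
    have h2 : (0:ℝ) ≤ (∑ l, (ω i l)^2) - c := by linarith [h i]
    positivity

lemma psd_upper {d n : ℕ} (ω : Fin n → Fin d → ℝ) (c : ℝ)
    (h : ∀ i, (∑ l, (ω i l)^2) ≤ c) :
    (c • empH ω - empHtilde ω).PosSemidef := by
  rw [← neg_sub (empHtilde ω) (c • empH ω)]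
  rw [Matrix.posSemidef_iff_dotProduct_mulVec]
  constructor
  · show _ = _
    rw [Matrix.conjTranspose_neg, (herm ω c).eq]
  · intro x
    rw [star_trivial, Matrix.neg_mulVec, dotProduct_neg, quad_form]
    rw [← Finset.sum_neg_distrib]
    apply Finset.sum_nonneg
    intro i _
    have h1 : (0:ℝ) ≤ 1/(n:ℝ) := by positivity
    have h2 : (∑ l, (ω i l)^2) - c ≤ 0 := by linarith [h i]
    have h3 : (0:ℝ) ≤ (∑ p, x p * ω i p)^2 := sq_nonneg _
    nlinarith [mul_nonneg (mul_nonneg h1 (neg_nonneg.2 h2)) h3]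

lemma tail_low (μ σ : ℝ) (hσ : 0 < σ) (d : ℕ) :
    (Measure.pi fun _ : Fin d => gaussianReal μ (σ^2).toNNReal)
      {x | (∑ l, (x l)^2) ≤ (1/4)*(μ^2+σ^2)*d}
      ≤ ENNReal.ofReal (Real.exp (-(d:ℝ)/16)) := by
  have hv : (((σ^2).toNNReal : ℝ≥0) : ℝ) = σ^2 := Real.coe_toNNReal _ (sq_nonneg σ)
  have hσ2 : (0:ℝ) < σ^2 := by positivity
  set t : ℝ := -(1/(2*σ^2)) with ht_def
  have ht2 : 2 * (((σ^2).toNNReal : ℝ≥0) : ℝ) * t = -1 := by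
    rw [hv, ht_def]; field_simp
  have ht : 2 * (((σ^2).toNNReal : ℝ≥0) : ℝ) * t < 1 := by rw [ht2]; norm_num
  obtain ⟨hint, hval⟩ := gauss_exp_sq μ (σ^2).toNNReal (by rw [hv]; exact hσ2) t ht
  set ν := gaussianReal μ (σ^2).toNNReal
  set P := Measure.pi fun _ : Fin d => ν with hP
  obtain ⟨hint2, hval2⟩ := pi_exp_sum ν d t hint
  set X : (Fin d → ℝ) → ℝ := fun x => ∑ l, (x l)^2 with hX
  have hmgf : mgf X P t = (Real.exp (t * μ^2 / 2) / Real.sqrt 2)^d := by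
    rw [mgf]
    rw [hval2, hval, ht2]
    norm_num
  have hI : Real.exp (t * μ^2 / 2) / Real.sqrt 2 = Real.exp (t*μ^2/2 - Real.log 2 / 2) := by
    rw [Real.exp_sub]
    congr 1
    rw [← Real.log_sqrt (by norm_num : (0:ℝ) ≤ 2), Real.exp_log (Real.sqrt_pos.mpr (by norm_num))]
  have hchern := measure_le_le_exp_mul_mgf (μ := P) (X := X) ((1/4)*(μ^2+σ^2)*d)
      (by rw [ht_def]; exact neg_nonpos.mpr (by positivity) : t ≤ 0) hint2
  rw [hmgf, hI, ← Real.exp_nat_mul, ← Real.exp_add] at hchern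
  have hexp : -t * ((1/4)*(μ^2+σ^2)*d) + d * (t*μ^2/2 - Real.log 2 / 2) ≤ -(d:ℝ)/16 := by
    have hlog : (0.6931471803 : ℝ) < Real.log 2 := Real.log_two_gt_d9
    have hd0 : (0:ℝ) ≤ d := Nat.cast_nonneg d
    have hμ2 : (0:ℝ) ≤ μ^2 := sq_nonneg μ
    rw [ht_def]
    have e1 : -(-(1 / (2 * σ ^ 2))) * (1 / 4 * (μ ^ 2 + σ ^ 2) * (d:ℝ))
        + (d:ℝ) * (-(1 / (2 * σ ^ 2)) * μ ^ 2 / 2 - Real.log 2 / 2)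
        = (d:ℝ) * ((1:ℝ)/8 - Real.log 2/2) - (d:ℝ) * (μ^2/σ^2)/8 := by
      field_simp
      ring
    rw [e1]
    nlinarith [mul_nonneg hd0 (div_nonneg hμ2 hσ2.le), mul_nonneg hd0 (sub_nonneg.mpr hlog.le)]
  exact (ENNReal.le_ofReal_iff_toReal_le (measure_ne_top P _) (Real.exp_pos _).le).mpr
    (le_trans hchern (Real.exp_le_exp.mpr hexp))

lemma tail_high (μ σ : ℝ) (hσ : 0 < σ) (d : ℕ) (hd : 3 ≤ d) :
    (Measure.pi fun _ : Fin d => gaussianReal μ (σ^2).toNNReal)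
      {x | 4*(μ^2+σ^2)*(d:ℝ) ≤ ∑ l, (x l)^2}
      ≤ ENNReal.ofReal (Real.exp (-Real.sqrt d)) := by
  have hv : (((σ^2).toNNReal : ℝ≥0) : ℝ) = σ^2 := Real.coe_toNNReal _ (sq_nonneg σ)
  have hσ2 : (0:ℝ) < σ^2 := by positivity
  set t : ℝ := 1/(4*σ^2) with ht_def
  have ht2 : 2 * (((σ^2).toNNReal : ℝ≥0) : ℝ) * t = 1/2 := by
    rw [hv, ht_def]; field_simp; ring
  have ht : 2 * (((σ^2).toNNReal : ℝ≥0) : ℝ) * t < 1 := by rw [ht2]; norm_num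
  obtain ⟨hint, hval⟩ := gauss_exp_sq μ (σ^2).toNNReal (by rw [hv]; exact hσ2) t ht
  set ν := gaussianReal μ (σ^2).toNNReal
  set P := Measure.pi fun _ : Fin d => ν with hP
  obtain ⟨hint2, hval2⟩ := pi_exp_sum ν d t hint
  set X : (Fin d → ℝ) → ℝ := fun x => ∑ l, (x l)^2 with hX
  have hhalf : (1:ℝ) - 1/2 = 1/2 := by norm_num
  have hmgf : mgf X P t = (Real.exp (t * μ^2 / (1/2)) / Real.sqrt (1/2))^d := by
    rw [mgf, hval2, hval, ht2, hhalf]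
  have hI : Real.exp (t * μ^2 / (1/2)) / Real.sqrt (1/2)
      = Real.exp (2*t*μ^2 + Real.log 2 / 2) := by
    have h2 : Real.sqrt (1/2) = Real.exp (-(Real.log 2/2)) := by
      rw [← Real.exp_log (Real.sqrt_pos.mpr (by norm_num : (0:ℝ) < 1/2))]
      congr 1
      rw [Real.log_sqrt (by norm_num : (0:ℝ) ≤ 1/2), one_div, Real.log_inv]
      ring
    rw [h2, ← Real.exp_sub]
    congr 1
    ring
  have hchern := measure_ge_le_exp_mul_mgf (μ := P) (X := X) (4*(μ^2+σ^2)*(d:ℝ))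
      (by rw [ht_def]; positivity : 0 ≤ t) hint2
  rw [hmgf, hI, ← Real.exp_nat_mul, ← Real.exp_add] at hchern
  have hexp : -t * (4*(μ^2+σ^2)*(d:ℝ)) + d * (2*t*μ^2 + Real.log 2 / 2) ≤ -Real.sqrt d := by
    have hlog : Real.log 2 < 0.6931471808 := Real.log_two_lt_d9
    have hd0 : (0:ℝ) ≤ d := Nat.cast_nonneg d
    have hμ2 : (0:ℝ) ≤ μ^2 := sq_nonneg μ
    rw [ht_def]
    have e1 : -(1 / (4 * σ ^ 2)) * (4*(μ^2+σ^2)*(d:ℝ))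
        + (d:ℝ) * (2*(1 / (4 * σ ^ 2))*μ^2 + Real.log 2 / 2)
        = (d:ℝ) * (Real.log 2/2 - 1) - (d:ℝ) * (μ^2/σ^2)/2 := by
      field_simp
      ring
    rw [e1]
    have hs : Real.sqrt d * Real.sqrt d = (d:ℝ) := Real.mul_self_sqrt hd0
    have hs3 : Real.sqrt 3 ≤ Real.sqrt d := Real.sqrt_le_sqrt (by exact_mod_cast hd)
    have h17 : (1.7:ℝ) ≤ Real.sqrt 3 := by
      nlinarith [Real.sq_sqrt (by norm_num : (0:ℝ) ≤ 3), Real.sqrt_nonneg 3]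
    nlinarith [mul_nonneg hd0 (div_nonneg hμ2 hσ2.le), Real.sqrt_nonneg (d:ℝ)]
  exact (ENNReal.le_ofReal_iff_toReal_le (measure_ne_top P _) (Real.exp_pos _).le).mpr
    (le_trans hchern (Real.exp_le_exp.mpr hexp))

lemma marg {α : Type*} [MeasurableSpace α] (P : Measure α) [IsProbabilityMeasure P]
    [SigmaFinite P] (n : ℕ) (i : Fin n) (S : Set α) :
    Measure.pi (fun _ : Fin n => P) (Function.eval i ⁻¹' S) = P S := by
  classical
  rw [Set.eval_preimage, Measure.pi_pi]
  rw [Finset.prod_eq_single i]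
  · simp
  · intro b _ hb
    rw [Function.update_of_ne hb]
    exact measure_univ
  · intro h
    exact absurd (Finset.mem_univ i) h

end Aux

open Real NNReal Finset
open scoped ENNReal

/-- for i.i.d. `N(μ, σ²)` coordinates, with probability at least
`1 − 2n(e^{−d/16} + e^{−√d})` one has `C₂(μ²+σ²)d·H ⪯ H̃ ⪯ C₃(μ²+σ²)d·H`. -/
theorem stmt19 : ∃ (C₂ C₃ : ℝ) (d₀ : ℕ), 0 < C₂ ∧ 0 < C₃ ∧ 0 < d₀ ∧
    ∀ (μ σ : ℝ) (d n : ℕ), 0 < σ → d₀ ≤ d →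
      ENNReal.ofReal
          (1 - 2 * n * (Real.exp (-(d : ℝ) / 16) + Real.exp (-Real.sqrt d))) ≤
      (Measure.pi fun _ : Fin n =>
          Measure.pi fun _ : Fin d => gaussianReal μ (Real.toNNReal (σ ^ 2)))
        {ω : Fin n → Fin d → ℝ |
          ((empHtilde ω - (C₂ * (μ ^ 2 + σ ^ 2) * d) • empH ω).PosSemidef) ∧
          (((C₃ * (μ ^ 2 + σ ^ 2) * d) • empH ω - empHtilde ω).PosSemidef)} := by
  refine ⟨1/4, 4, 3, by norm_num, by norm_num, by norm_num, ?_⟩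
  intro μ σ d n hσ hd
  set ν := gaussianReal μ (Real.toNNReal (σ ^ 2)) with hν
  set P := Measure.pi fun _ : Fin d => ν with hPdef
  set PP := Measure.pi fun _ : Fin n => P with hPPdef
  set e1 : ℝ := Real.exp (-(d : ℝ) / 16) with he1
  set e2 : ℝ := Real.exp (-Real.sqrt d) with he2
  have he1p : 0 < e1 := Real.exp_pos _
  have he2p : 0 < e2 := Real.exp_pos _
  set G : Set (Fin d → ℝ) :=
    {x | (1/4)*(μ^2+σ^2)*(d:ℝ) < ∑ l, (x l)^2 ∧ (∑ l, (x l)^2) < 4*(μ^2+σ^2)*(d:ℝ)} with hG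
  set GG : Set (Fin n → Fin d → ℝ) := ⋂ i, Function.eval i ⁻¹' G with hGG
  -- GG is contained in the target event
  have hsub : GG ⊆ {ω : Fin n → Fin d → ℝ |
      ((empHtilde ω - ((1:ℝ)/4 * (μ ^ 2 + σ ^ 2) * d) • empH ω).PosSemidef) ∧
      (((4:ℝ) * (μ ^ 2 + σ ^ 2) * d) • empH ω - empHtilde ω).PosSemidef} := by
    intro ω hω
    simp only [hGG, Set.mem_iInter, Set.mem_preimage, hG, Set.mem_setOf_eq] at hω
    constructor
    · exact psd_lower ω _ (fun i => (hω i).1.le)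
    · exact psd_upper ω _ (fun i => (hω i).2.le)
  -- bound the bad probability for one vector
  have hGc : P Gᶜ ≤ ENNReal.ofReal (e1 + e2) := by
    have hsub2 : Gᶜ ⊆ {x : Fin d → ℝ | (∑ l, (x l)^2) ≤ (1/4)*(μ^2+σ^2)*(d:ℝ)}
        ∪ {x : Fin d → ℝ | 4*(μ^2+σ^2)*(d:ℝ) ≤ ∑ l, (x l)^2} := by
      intro x hx
      simp only [hG, Set.mem_compl_iff, Set.mem_setOf_eq, not_and_or, not_lt] at hx
      rcases hx with h | h
      · exact Or.inl h
      · exact Or.inr h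
    calc P Gᶜ ≤ P ({x : Fin d → ℝ | (∑ l, (x l)^2) ≤ (1/4)*(μ^2+σ^2)*(d:ℝ)}
            ∪ {x : Fin d → ℝ | 4*(μ^2+σ^2)*(d:ℝ) ≤ ∑ l, (x l)^2}) := measure_mono hsub2
      _ ≤ P {x : Fin d → ℝ | (∑ l, (x l)^2) ≤ (1/4)*(μ^2+σ^2)*(d:ℝ)}
            + P {x : Fin d → ℝ | 4*(μ^2+σ^2)*(d:ℝ) ≤ ∑ l, (x l)^2} := measure_union_le _ _
      _ ≤ ENNReal.ofReal e1 + ENNReal.ofReal e2 :=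
            add_le_add (tail_low μ σ hσ d) (tail_high μ σ hσ d hd)
      _ = ENNReal.ofReal (e1 + e2) := (ENNReal.ofReal_add he1p.le he2p.le).symm
  -- union bound
  have hGGc : PP GGᶜ ≤ (n : ℝ≥0∞) * ENNReal.ofReal (e1 + e2) := by
    have hc : GGᶜ = ⋃ i, Function.eval i ⁻¹' Gᶜ := by
      rw [hGG, Set.compl_iInter]
      simp [Set.preimage_compl]
    rw [hc]
    calc PP (⋃ i, Function.eval i ⁻¹' Gᶜ) ≤ ∑' i : Fin n, PP (Function.eval i ⁻¹' Gᶜ) :=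
          measure_iUnion_le _
      _ = ∑ i : Fin n, PP (Function.eval i ⁻¹' Gᶜ) := tsum_fintype _
      _ = ∑ _i : Fin n, P Gᶜ := by
          apply Finset.sum_congr rfl
          intro i _
          exact marg P n i Gᶜ
      _ = (n : ℝ≥0∞) * P Gᶜ := by
          rw [Finset.sum_const, Finset.card_univ, Fintype.card_fin, nsmul_eq_mul]
      _ ≤ (n : ℝ≥0∞) * ENNReal.ofReal (e1 + e2) := by
          exact mul_le_mul_right hGc _
  -- put everything together
  have hone : (1 : ℝ≥0∞) ≤ PP GG + PP GGᶜ := by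
    have h1 : PP Set.univ = 1 := measure_univ
    calc (1:ℝ≥0∞) = PP Set.univ := h1.symm
      _ = PP (GG ∪ GGᶜ) := by rw [Set.union_compl_self]
      _ ≤ PP GG + PP GGᶜ := measure_union_le _ _
  calc ENNReal.ofReal (1 - 2 * n * (e1 + e2))
      ≤ ENNReal.ofReal (1 - n * (e1 + e2)) := by
        apply ENNReal.ofReal_le_ofReal
        have : (0:ℝ) ≤ (n:ℝ) * (e1 + e2) := by positivity
        nlinarith
    _ = 1 - ENNReal.ofReal ((n:ℝ) * (e1 + e2)) := by
        rw [ENNReal.ofReal_sub _ (by positivity), ENNReal.ofReal_one]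
    _ = 1 - (n : ℝ≥0∞) * ENNReal.ofReal (e1 + e2) := by
        rw [ENNReal.ofReal_mul (by positivity), ENNReal.ofReal_natCast]
    _ ≤ 1 - PP GGᶜ := tsub_le_tsub_left hGGc 1
    _ ≤ PP GG := by
        rw [tsub_le_iff_right]
        exact hone
    _ ≤ _ := measure_mono hsub

end
end
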